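/- arXiv:2502.13703 — 3 statements merged into one kernel-verified Lean document; each statement's English description precedes it below -/
import Mathlib

section
/- Let X_n, ..., X_1 be the layer sets of the friendship graph G^f obtained by iterated clique peeling. An enemy-oriented hedonic game without neutrals admits a strictly core stable partition if and only if for every j ∈ {1,...,n}, the subgraph of G^f induced by X_j can be partitioned into pairwise disjoint cliques each with exactly j vertices. -/
open scoped Classical

variable {A : Type*}

/-- Number of friends of agent `i` in coalition `S` (friendship graph `G`). -/
noncomputable def friendsIn (G : SimpleGraph A) (i : A) (S : Finset A) : ℕ :=
  (S.filter fun j => G.Adj i j).card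

/-- Number of enemies of agent `i` in coalition `S`; without neutrals, an enemy
is any distinct non-adjacent agent. -/
noncomputable def enemiesIn (G : SimpleGraph A) (i : A) (S : Finset A) : ℕ :=
  (S.filter fun j => j ≠ i ∧ ¬ G.Adj i j).card

/-- Agent `i` prefers coalition `S1` over `S2`. -/
def Prefers (G : SimpleGraph A) (i : A) (S1 S2 : Finset A) : Prop :=
  enemiesIn G i S1 < enemiesIn G i S2 ∨
    (enemiesIn G i S1 = enemiesIn G i S2 ∧ friendsIn G i S2 < friendsIn G i S1)

/-- Agent `i` weakly prefers coalition `S1` over `S2`. -/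
def WeaklyPrefers (G : SimpleGraph A) (i : A) (S1 S2 : Finset A) : Prop :=
  ¬ Prefers G i S2 S1

variable [Fintype A] [DecidableEq A]

/-- Coalition `B` blocks partition `P`. -/
def Blocks (G : SimpleGraph A) (P : Finpartition (Finset.univ : Finset A))
    (B : Finset A) : Prop :=
  B.Nonempty ∧ ∀ i ∈ B, ∀ C ∈ P.parts, i ∈ C → Prefers G i B C

/-- Coalition `B` weakly blocks partition `P`. -/
def WeaklyBlocks (G : SimpleGraph A) (P : Finpartition (Finset.univ : Finset A))
    (B : Finset A) : Prop :=
  B.Nonempty ∧ (∀ i ∈ B, ∀ C ∈ P.parts, i ∈ C → WeaklyPrefers G i B C) ∧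
    ∃ i ∈ B, ∀ C ∈ P.parts, i ∈ C → Prefers G i B C

/-- Partition `P` is core stable: no coalition blocks it. -/
def CoreStable (G : SimpleGraph A) (P : Finpartition (Finset.univ : Finset A)) : Prop :=
  ∀ B : Finset A, ¬ Blocks G P B

/-- Partition `P` is strictly core stable: no coalition weakly blocks it. -/
def StrictlyCoreStable (G : SimpleGraph A)
    (P : Finpartition (Finset.univ : Finset A)) : Prop :=
  ∀ B : Finset A, ¬ WeaklyBlocks G P B

/-- The set of vertices of `V` that lie in some clique with exactly `k` vertices of the
subgraph of `G` induced by `V`. -/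
noncomputable def cliqueLayer (G : SimpleGraph A) (V : Finset A) (k : ℕ) : Finset A :=
  V.filter fun v => ∃ D : Finset A, D ⊆ V ∧ v ∈ D ∧ G.IsNClique k D

/-- `remainingAfter G n j` is the set `V'_{n-j}` of vertices remaining after the first `j`
peeling steps of the iterated clique peeling (starting from all of `A` at `j = 0`). -/
noncomputable def remainingAfter (G : SimpleGraph A) (n : ℕ) : ℕ → Finset A
  | 0 => Finset.univ
  | j + 1 => remainingAfter G n j \ cliqueLayer G (remainingAfter G n j) (n - j)

/-- The layer set `X_k` of the iterated clique peeling of `G` (with `n = |A|`):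
the vertices of `V'_k` lying in some clique with exactly `k` vertices of the subgraph
induced by `V'_k`. -/
noncomputable def layerX (G : SimpleGraph A) (n k : ℕ) : Finset A :=
  cliqueLayer G (remainingAfter G n (n - k)) k

section Helpers

variable {A : Type*} [Fintype A] [DecidableEq A] {G : SimpleGraph A}

lemma prefers_def {i : A} {S1 S2 : Finset A} :
    Prefers G i S1 S2 ↔ (enemiesIn G i S1 < enemiesIn G i S2 ∨
      (enemiesIn G i S1 = enemiesIn G i S2 ∧ friendsIn G i S2 < friendsIn G i S1)) := Iff.rfl

lemma weaklyPrefers_def {i : A} {S1 S2 : Finset A} :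
    WeaklyPrefers G i S1 S2 ↔ ¬ Prefers G i S2 S1 := Iff.rfl

lemma Prefers.asymm {i : A} {S1 S2 : Finset A} (h : Prefers G i S1 S2) :
    WeaklyPrefers G i S1 S2 := by
  rw [weaklyPrefers_def, prefers_def]
  rw [prefers_def] at h
  rcases h with h | ⟨h1, h2⟩ <;> rintro (h' | ⟨h1', h2'⟩) <;> omega

lemma enemiesIn_eq_zero {i : A} {S : Finset A} (h : ∀ j ∈ S, j ≠ i → G.Adj i j) :
    enemiesIn G i S = 0 := by
  simp only [enemiesIn, Finset.card_eq_zero, Finset.filter_eq_empty_iff]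
  rintro j hj ⟨hne, hadj⟩
  exact hadj (h j hj hne)

lemma enemiesIn_pos {i j : A} {S : Finset A} (hj : j ∈ S) (hne : j ≠ i)
    (hadj : ¬ G.Adj i j) : 0 < enemiesIn G i S := by
  simp only [enemiesIn, Finset.card_pos]
  exact ⟨j, by simp only [Finset.mem_filter]; exact ⟨hj, hne, hadj⟩⟩

lemma adj_of_enemiesIn_eq_zero {i j : A} {S : Finset A} (h : enemiesIn G i S = 0)
    (hj : j ∈ S) (hne : j ≠ i) : G.Adj i j := by
  by_contra hadj
  exact absurd h (enemiesIn_pos hj hne hadj).ne'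

lemma clique_enemiesIn {S : Finset A} (h : G.IsClique S) {i : A} (hi : i ∈ S) :
    enemiesIn G i S = 0 :=
  enemiesIn_eq_zero fun j hj hne =>
    h (by simpa using hi) (by simpa using hj) (Ne.symm hne)

lemma clique_friendsIn {S : Finset A} (h : G.IsClique S) {i : A} (hi : i ∈ S) :
    friendsIn G i S = S.card - 1 := by
  rw [friendsIn]
  have hfe : S.filter (fun j => G.Adj i j) = S.erase i := by
    ext j
    simp only [Finset.mem_filter, Finset.mem_erase]
    constructor
    · rintro ⟨hj, hadj⟩; exact ⟨hadj.ne', hj⟩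
    · rintro ⟨hne, hj⟩
      exact ⟨hj, h (by simpa using hi) (by simpa using hj) (Ne.symm hne)⟩
  rw [hfe, Finset.card_erase_of_mem hi]

lemma mem_cliqueLayer {V : Finset A} {k : ℕ} {v : A} :
    v ∈ cliqueLayer G V k ↔ v ∈ V ∧ ∃ D : Finset A, D ⊆ V ∧ v ∈ D ∧ G.IsNClique k D := by
  simp [cliqueLayer]

lemma cliqueLayer_subset {V : Finset A} {k : ℕ} : cliqueLayer G V k ⊆ V :=
  Finset.filter_subset _ _

lemma subset_cliqueLayer {V D : Finset A} {k : ℕ} (hDV : D ⊆ V) (hD : G.IsNClique k D) :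
    D ⊆ cliqueLayer G V k := fun v hv => mem_cliqueLayer.2 ⟨hDV hv, D, hDV, hv, hD⟩

lemma remainingAfter_zero (n : ℕ) : remainingAfter G n 0 = (Finset.univ : Finset A) := rfl

lemma remainingAfter_succ (n j : ℕ) :
    remainingAfter G n (j+1)
      = remainingAfter G n j \ cliqueLayer G (remainingAfter G n j) (n - j) := rfl

lemma remainingAfter_antitone {n : ℕ} : ∀ {j j' : ℕ}, j ≤ j' →
    remainingAfter G n j' ⊆ remainingAfter G n j := by
  intro j j' h
  induction j' with
  | zero =>
    obtain rfl := Nat.le_zero.1 h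
    exact subset_rfl
  | succ j' ih =>
    rcases Nat.eq_or_lt_of_le h with rfl | h'
    · exact subset_rfl
    · exact Finset.sdiff_subset.trans (ih (Nat.lt_succ_iff.1 h'))

lemma cliqueLayer_one (V : Finset A) : cliqueLayer G V 1 = V := by
  refine Finset.Subset.antisymm cliqueLayer_subset fun v hv => ?_
  exact mem_cliqueLayer.2 ⟨hv, {v}, by simpa using hv, Finset.mem_singleton_self v,
    SimpleGraph.isNClique_singleton.2 rfl⟩

lemma remainingAfter_self {n : ℕ} (hn : 1 ≤ n) : remainingAfter G n n = (∅ : Finset A) := by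
  obtain ⟨m, rfl⟩ : ∃ m, n = m + 1 := ⟨n - 1, by omega⟩
  rw [remainingAfter_succ, show m + 1 - m = 1 by omega, cliqueLayer_one, Finset.sdiff_self]

lemma disjoint_peel {n j j' : ℕ} (h : j < j') :
    Disjoint (cliqueLayer G (remainingAfter G n j) (n - j))
      (cliqueLayer G (remainingAfter G n j') (n - j')) := by
  rw [Finset.disjoint_left]
  intro x hx hx'
  have hx2 : x ∈ remainingAfter G n (j+1) :=
    remainingAfter_antitone h (cliqueLayer_subset hx')
  rw [remainingAfter_succ] at hx2
  exact (Finset.mem_sdiff.1 hx2).2 hx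

lemma layerX_eq {n k : ℕ} (hk : k ≤ n) :
    layerX G n k = cliqueLayer G (remainingAfter G n (n - k)) (n - (n - k)) := by
  rw [layerX, Nat.sub_sub_self hk]

lemma disjoint_layerX {n k k' : ℕ} (hk1 : 1 ≤ k) (hk : k ≤ n) (hk' : k' ≤ n) (h : k ≠ k') :
    Disjoint (layerX G n k) (layerX G n k') := by
  rw [layerX_eq hk, layerX_eq hk']
  rcases (show n - k < n - k' ∨ n - k' < n - k by omega) with h' | h'
  · exact disjoint_peel h'
  · exact (disjoint_peel h').symm

lemma exists_mem_layerX {n : ℕ} (hn : 1 ≤ n) (i : A) :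
    ∃ k, 1 ≤ k ∧ k ≤ n ∧ i ∈ layerX G n k := by
  have hex : ∃ j, i ∉ remainingAfter G n j := ⟨n, by simp [remainingAfter_self hn]⟩
  set j := Nat.find hex with hjdef
  have hj : i ∉ remainingAfter G n j := Nat.find_spec hex
  have hj0 : j ≠ 0 := by
    intro h
    rw [h, remainingAfter_zero] at hj
    exact hj (Finset.mem_univ i)
  have hjn : j ≤ n := Nat.find_le (by simp [remainingAfter_self hn])
  have hprev : i ∈ remainingAfter G n (j - 1) :=
    not_not.1 (Nat.find_min hex (by omega))
  have hstep := remainingAfter_succ (G := G) n (j - 1)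
  rw [show j - 1 + 1 = j by omega] at hstep
  have hL : i ∈ cliqueLayer G (remainingAfter G n (j-1)) (n - (j-1)) := by
    by_contra hL
    exact hj (hstep ▸ Finset.mem_sdiff.2 ⟨hprev, hL⟩)
  refine ⟨n - (j-1), by omega, by omega, ?_⟩
  rw [layerX, show n - (n - (j-1)) = j - 1 by omega]
  exact hL

variable {P : Finpartition (Finset.univ : Finset A)}

lemma parts_isClique (hP : StrictlyCoreStable G P) {C : Finset A} (hC : C ∈ P.parts) :
    G.IsClique (C : Set A) := by
  intro i hi j hj hij
  by_contra hadj
  apply hP {i}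
  have hiC : i ∈ C := hi
  have hjC : j ∈ C := hj
  have key : ∀ C' ∈ P.parts, i ∈ C' → Prefers G i {i} C' := by
    intro C' hC' hiC'
    obtain rfl : C' = C := P.eq_of_mem_parts hC' hC hiC' hiC
    left
    have h1 : enemiesIn G i {i} = 0 := enemiesIn_eq_zero (by simp)
    rw [h1]
    exact enemiesIn_pos hjC (Ne.symm hij) hadj
  refine ⟨Finset.singleton_nonempty i, ?_, i, Finset.mem_singleton_self i, key⟩
  intro i' hi' C' hC' hmem
  rw [Finset.mem_singleton] at hi'
  subst hi'
  exact (key C' hC' hmem).asymm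

lemma part_card_eq (hP : StrictlyCoreStable G P) {D : Finset A} {k : ℕ}
    (hD : G.IsNClique k D)
    (hle : ∀ i ∈ D, (P.part i).card ≤ k) : ∀ i ∈ D, (P.part i).card = k := by
  by_contra hcon
  push_neg at hcon
  obtain ⟨i0, hi0, hne⟩ := hcon
  apply hP D
  have hnums : ∀ i ∈ D, ∀ C ∈ P.parts, i ∈ C →
      enemiesIn G i D = 0 ∧ friendsIn G i D = k - 1 ∧ enemiesIn G i C = 0 ∧
        friendsIn G i C = C.card - 1 ∧ C.card ≤ k ∧ 1 ≤ C.card ∧ C = P.part i := by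
    intro i hi C hC hiC
    have hCpart : C = P.part i := (P.part_eq_of_mem hC hiC).symm
    refine ⟨clique_enemiesIn hD.1 hi, by rw [clique_friendsIn hD.1 hi, hD.2],
      clique_enemiesIn (parts_isClique hP hC) hiC,
      clique_friendsIn (parts_isClique hP hC) hiC,
      by rw [hCpart]; exact hle i hi,
      Finset.card_pos.2 ⟨i, hiC⟩, hCpart⟩
  refine ⟨⟨i0, hi0⟩, ?_, i0, hi0, ?_⟩
  · intro i hi C hC hiC
    obtain ⟨e1, f1, e2, f2, hc, hc1, -⟩ := hnums i hi C hC hiC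
    rw [weaklyPrefers_def, prefers_def]
    rintro (h | ⟨h1, h2⟩) <;> omega
  · intro C hC hiC
    obtain ⟨e1, f1, e2, f2, hc, hc1, hCpart⟩ := hnums i0 hi0 C hC hiC
    rw [prefers_def]
    right
    have hck : C.card ≠ k := by rw [hCpart]; exact hne
    exact ⟨by omega, by omega⟩

lemma peel_eq (hP : StrictlyCoreStable G P) {j : ℕ} (hj : j < Fintype.card A)
    (hR : remainingAfter G (Fintype.card A) j
        = (P.parts.filter fun C => C.card ≤ Fintype.card A - j).biUnion id) :
    cliqueLayer G (remainingAfter G (Fintype.card A) j) (Fintype.card A - j)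
      = (P.parts.filter fun C => C.card = Fintype.card A - j).biUnion id := by
  set n := Fintype.card A with hn
  set k := n - j with hk
  apply Finset.Subset.antisymm
  · intro v hv
    obtain ⟨hvR, D, hDR, hvD, hDcl⟩ := mem_cliqueLayer.1 hv
    have hle : ∀ i ∈ D, (P.part i).card ≤ k := by
      intro i hi
      have hiR : i ∈ remainingAfter G n j := hDR hi
      rw [hR] at hiR
      obtain ⟨C, hC, hiC⟩ := Finset.mem_biUnion.1 hiR
      rw [Finset.mem_filter] at hC
      rw [P.part_eq_of_mem hC.1 hiC]
      exact hC.2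
    have hvcard := part_card_eq hP hDcl hle v hvD
    exact Finset.mem_biUnion.2 ⟨P.part v,
      Finset.mem_filter.2 ⟨P.part_mem.2 (Finset.mem_univ v), hvcard⟩,
      P.mem_part (Finset.mem_univ v)⟩
  · intro v hv
    obtain ⟨C, hC, hvC⟩ := Finset.mem_biUnion.1 hv
    rw [Finset.mem_filter] at hC
    have hCcl : G.IsNClique k C := ⟨parts_isClique hP hC.1, hC.2⟩
    have hCR : C ⊆ remainingAfter G n j := by
      rw [hR]
      intro x hx
      exact Finset.mem_biUnion.2 ⟨C, Finset.mem_filter.2 ⟨hC.1, le_of_eq hC.2⟩, hx⟩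
    exact subset_cliqueLayer hCR hCcl hvC

lemma remaining_eq (hP : StrictlyCoreStable G P) :
    ∀ j, j ≤ Fintype.card A →
    remainingAfter G (Fintype.card A) j
      = (P.parts.filter fun C => C.card ≤ Fintype.card A - j).biUnion id := by
  intro j
  induction j with
  | zero =>
    intro _
    rw [Nat.sub_zero]
    have hfil : P.parts.filter (fun C => C.card ≤ Fintype.card A) = P.parts := by
      apply Finset.filter_true_of_mem
      intro C hC
      calc C.card ≤ (Finset.univ : Finset A).card := Finset.card_le_card (P.le hC)
        _ = Fintype.card A := Finset.card_univ
    rw [remainingAfter_zero, hfil]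
    exact P.biUnion_parts.symm
  | succ j ih =>
    intro hj1
    have hj : j < Fintype.card A := hj1
    have hR := ih (le_of_lt hj)
    rw [remainingAfter_succ, peel_eq hP hj hR, hR]
    ext v
    simp only [Finset.mem_sdiff, Finset.mem_biUnion, Finset.mem_filter, id]
    constructor
    · rintro ⟨⟨C, ⟨hC, hCle⟩, hvC⟩, hnot⟩
      refine ⟨C, ⟨hC, ?_⟩, hvC⟩
      have hne : C.card ≠ Fintype.card A - j := fun h => hnot ⟨C, ⟨hC, h⟩, hvC⟩
      omega
    · rintro ⟨C, ⟨hC, hCle⟩, hvC⟩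
      refine ⟨⟨C, ⟨hC, by omega⟩, hvC⟩, ?_⟩
      rintro ⟨C', ⟨hC', hC'eq⟩, hvC'⟩
      obtain rfl : C' = C := P.eq_of_mem_parts hC' hC hvC' hvC
      omega

end Helpers

/-- A strictly core stable partition exists iff for every `j`, the subgraph
of the friendship graph induced by the layer set `X_j` can be partitioned into pairwise
disjoint cliques each with exactly `j` vertices. -/
theorem stmt_4 [Nonempty A] (G : SimpleGraph A) :
    (∃ P : Finpartition (Finset.univ : Finset A), StrictlyCoreStable G P) ↔
      ∀ j ∈ Finset.Icc 1 (Fintype.card A),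
        ∃ Q : Finset (Finset A),
          (∀ D ∈ Q, G.IsNClique j D) ∧
          (Q : Set (Finset A)).PairwiseDisjoint id ∧
          Q.biUnion id = layerX G (Fintype.card A) j := by
  constructor
  · rintro ⟨P, hP⟩ j hj
    rw [Finset.mem_Icc] at hj
    obtain ⟨hj1, hjn⟩ := hj
    refine ⟨P.parts.filter (fun C => C.card = j), ?_, ?_, ?_⟩
    · intro D hD
      rw [Finset.mem_filter] at hD
      exact ⟨parts_isClique hP hD.1, hD.2⟩
    · exact P.disjoint.subset (Finset.coe_subset.2 (Finset.filter_subset _ _))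
    · have hlt : Fintype.card A - j < Fintype.card A := by omega
      have hpe := peel_eq hP hlt (remaining_eq hP (Fintype.card A - j) (by omega))
      rw [Nat.sub_sub_self hjn] at hpe
      rw [layerX, hpe]
  · intro H
    have hn1 : 1 ≤ Fintype.card A := Fintype.card_pos
    have H' : ∀ j : ℕ, ∃ Q : Finset (Finset A),
        j ∈ Finset.Icc 1 (Fintype.card A) →
          (∀ D ∈ Q, G.IsNClique j D) ∧
          (Q : Set (Finset A)).PairwiseDisjoint id ∧
          Q.biUnion id = layerX G (Fintype.card A) j := by
      intro j
      by_cases h : j ∈ Finset.Icc 1 (Fintype.card A)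
      · obtain ⟨Q, hQ⟩ := H j h
        exact ⟨Q, fun _ => hQ⟩
      · exact ⟨∅, fun h' => absurd h' h⟩
    choose Q hQ using H'
    set parts : Finset (Finset A) := (Finset.Icc 1 (Fintype.card A)).biUnion Q with hpartsdef
    have hfact : ∀ C ∈ parts, G.IsClique (C : Set A) ∧
        (1 ≤ C.card ∧ C.card ≤ Fintype.card A) ∧
        C ⊆ layerX G (Fintype.card A) C.card := by
      intro C hC
      obtain ⟨j, hj, hCj⟩ := Finset.mem_biUnion.1 hC
      have hcl := (hQ j hj).1 C hCj
      have hcard : C.card = j := hcl.2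
      have hbounds := Finset.mem_Icc.1 hj
      refine ⟨hcl.1, by omega, ?_⟩
      rw [hcard]
      exact (Finset.subset_biUnion_of_mem id hCj).trans (le_of_eq ((hQ j hj).2.2))
    have hdisj : (parts : Set (Finset A)).PairwiseDisjoint id := by
      intro D hD E hE hDE
      obtain ⟨j, hj, hDj⟩ := Finset.mem_biUnion.1 (Finset.mem_coe.1 hD)
      obtain ⟨j', hj', hEj'⟩ := Finset.mem_biUnion.1 (Finset.mem_coe.1 hE)
      by_cases hjj : j = j'
      · subst hjj
        exact (hQ j hj).2.1 (Finset.mem_coe.2 hDj) (Finset.mem_coe.2 hEj') hDE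
      · have hsub1 : D ⊆ layerX G (Fintype.card A) j :=
          (Finset.subset_biUnion_of_mem id hDj).trans (le_of_eq ((hQ j hj).2.2))
        have hsub2 : E ⊆ layerX G (Fintype.card A) j' :=
          (Finset.subset_biUnion_of_mem id hEj').trans (le_of_eq ((hQ j' hj').2.2))
        have hb := Finset.mem_Icc.1 hj
        have hb' := Finset.mem_Icc.1 hj'
        exact Disjoint.mono hsub1 hsub2 (disjoint_layerX hb.1 hb.2 hb'.2 hjj)
    have hsup : parts.sup id = (Finset.univ : Finset A) := by
      rw [Finset.sup_eq_biUnion]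
      apply Finset.Subset.antisymm (Finset.subset_univ _)
      intro i _
      obtain ⟨k, hk1, hkn, hik⟩ := exists_mem_layerX (G := G) hn1 i
      have hkIcc : k ∈ Finset.Icc 1 (Fintype.card A) := Finset.mem_Icc.2 ⟨hk1, hkn⟩
      rw [← (hQ k hkIcc).2.2] at hik
      obtain ⟨D, hD, hiD⟩ := Finset.mem_biUnion.1 hik
      exact Finset.mem_biUnion.2 ⟨D, Finset.mem_biUnion.2 ⟨k, hkIcc, hD⟩, hiD⟩
    have hbot : ⊥ ∉ parts := by
      intro h
      obtain ⟨j, hj, hQj⟩ := Finset.mem_biUnion.1 h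
      have hcard := ((hQ j hj).1 ⊥ hQj).2
      have hj1 := (Finset.mem_Icc.1 hj).1
      simp only [Finset.bot_eq_empty, Finset.card_empty] at hcard
      omega
    set P : Finpartition (Finset.univ : Finset A) :=
      ⟨parts, Finset.supIndep_iff_pairwiseDisjoint.2 hdisj, hsup, hbot⟩ with hPdef
    have hPparts : P.parts = parts := rfl
    refine ⟨P, ?_⟩
    rintro B ⟨hBne, hweak, i0, hi0B, hpref⟩
    have hpart : ∀ i, P.part i ∈ parts := fun i => P.part_mem.2 (Finset.mem_univ i)
    have h1 : ∀ i ∈ B, enemiesIn G i B = 0 ∧ (P.part i).card ≤ friendsIn G i B + 1 := by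
      intro i hi
      have hw := hweak i hi (P.part i) (P.part_mem.2 (Finset.mem_univ i))
        (P.mem_part (Finset.mem_univ i))
      have hcl := (hfact _ (hpart i)).1
      have hen : enemiesIn G i (P.part i) = 0 :=
        clique_enemiesIn hcl (P.mem_part (Finset.mem_univ i))
      have hfr : friendsIn G i (P.part i) = (P.part i).card - 1 :=
        clique_friendsIn hcl (P.mem_part (Finset.mem_univ i))
      have hcard1 : 1 ≤ (P.part i).card :=
        Finset.card_pos.2 ⟨i, P.mem_part (Finset.mem_univ i)⟩
      rw [weaklyPrefers_def, prefers_def, hen, hfr] at hw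
      push_neg at hw
      obtain ⟨hw1, hw2⟩ := hw
      have hen0 : enemiesIn G i B = 0 := by omega
      have hw3 := hw2 hen0.symm
      exact ⟨hen0, by omega⟩
    have hBcl : G.IsClique (B : Set A) := by
      intro x hx y hy hxy
      exact adj_of_enemiesIn_eq_zero (h1 x hx).1 hy (Ne.symm hxy)
    have hfrB : ∀ i ∈ B, friendsIn G i B = B.card - 1 := fun i hi => clique_friendsIn hBcl hi
    have h2 : ∀ i ∈ B, (P.part i).card ≤ B.card := by
      intro i hi
      have ha := (h1 i hi).2
      have hb := hfrB i hi
      have hc : 1 ≤ B.card := Finset.card_pos.2 ⟨i, hi⟩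
      omega
    have hstrict : (P.part i0).card < B.card := by
      have hp := hpref (P.part i0) (P.part_mem.2 (Finset.mem_univ i0))
        (P.mem_part (Finset.mem_univ i0))
      have hcl := (hfact _ (hpart i0)).1
      have hen := clique_enemiesIn hcl (P.mem_part (Finset.mem_univ i0))
      have henB := (h1 i0 hi0B).1
      have hfr := clique_friendsIn hcl (P.mem_part (Finset.mem_univ i0))
      have hfrB0 := hfrB i0 hi0B
      have hc1 : 1 ≤ (P.part i0).card :=
        Finset.card_pos.2 ⟨i0, P.mem_part (Finset.mem_univ i0)⟩
      have hc2 : 1 ≤ B.card := Finset.card_pos.2 ⟨i0, hi0B⟩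
      rw [prefers_def] at hp
      rcases hp with h | ⟨-, h⟩ <;> omega
    have hm1 : 1 ≤ B.card := Finset.card_pos.2 hBne
    have hmn : B.card ≤ Fintype.card A := Finset.card_le_univ B
    have hBsub : B ⊆ remainingAfter G (Fintype.card A) (Fintype.card A - B.card) := by
      intro i hi
      have hX := (hfact _ (hpart i)).2.2
      have hiX : i ∈ layerX G (Fintype.card A) (P.part i).card :=
        hX (P.mem_part (Finset.mem_univ i))
      have hjm : (P.part i).card ≤ B.card := h2 i hi
      have hsub : layerX G (Fintype.card A) (P.part i).card
          ⊆ remainingAfter G (Fintype.card A) (Fintype.card A - (P.part i).card) := by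
        rw [layerX]
        exact cliqueLayer_subset
      exact remainingAfter_antitone (by omega) (hsub hiX)
    have hBX : B ⊆ layerX G (Fintype.card A) B.card := by
      rw [layerX]
      exact subset_cliqueLayer hBsub ⟨hBcl, rfl⟩
    have hj0b := (hfact _ (hpart i0)).2.1
    have hi0X : i0 ∈ layerX G (Fintype.card A) (P.part i0).card :=
      (hfact _ (hpart i0)).2.2 (P.mem_part (Finset.mem_univ i0))
    have hd := disjoint_layerX (G := G) hj0b.1 hj0b.2 hmn
      (show (P.part i0).card ≠ B.card by omega)
    exact Finset.disjoint_left.1 hd hi0X (hBX hi0B)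
end

section
/- If the friendship graph G^f of an enemy-oriented hedonic game without neutrals is bipartite, then a strictly core stable partition exists if and only if the subgraph of G^f induced by the set of vertices of degree at least one has a perfect matching. -/
open scoped Classical

variable {A : Type*}

variable [Fintype A] [DecidableEq A]

section Helpers

variable {A : Type*} [Fintype A] [DecidableEq A]

lemma enemiesIn_eq_zero_iff {G : SimpleGraph A} {i : A} {S : Finset A} :
    enemiesIn G i S = 0 ↔ ∀ j ∈ S, j ≠ i → G.Adj i j := by
  simp only [enemiesIn, Finset.card_eq_zero, Finset.filter_eq_empty_iff]
  constructor
  · intro h j hj hne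
    by_contra hadj
    exact h hj ⟨hne, hadj⟩
  · rintro h j hj ⟨hne, hadj⟩
    exact hadj (h j hj hne)

lemma friendsIn_le {G : SimpleGraph A} {i : A} {S : Finset A} (hi : i ∈ S) :
    friendsIn G i S ≤ S.card - 1 := by
  have hsub : S.filter (fun j => G.Adj i j) ⊆ S.erase i := by
    intro j hj
    rw [Finset.mem_filter] at hj
    exact Finset.mem_erase.2 ⟨fun h => G.irrefl (h ▸ hj.2), hj.1⟩
  calc friendsIn G i S ≤ (S.erase i).card := Finset.card_le_card hsub
  _ = S.card - 1 := Finset.card_erase_of_mem hi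

lemma friendsIn_singleton {G : SimpleGraph A} (i : A) : friendsIn G i {i} = 0 := by
  simp only [friendsIn, Finset.card_eq_zero, Finset.filter_eq_empty_iff]
  intro j hj
  rw [Finset.mem_singleton] at hj
  subst hj
  exact G.irrefl

lemma friendsIn_pair {G : SimpleGraph A} {i w : A} (h : G.Adj i w) :
    friendsIn G i {i, w} = 1 := by
  have : ({i, w} : Finset A).filter (fun j => G.Adj i j) = {w} := by
    ext j
    simp only [Finset.mem_filter, Finset.mem_insert, Finset.mem_singleton]
    constructor
    · rintro ⟨h1 | h1, h2⟩
      · exact absurd (h1 ▸ h2) G.irrefl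
      · exact h1
    · rintro rfl; exact ⟨Or.inr rfl, h⟩
  rw [friendsIn, this, Finset.card_singleton]

lemma prefers_asymm {G : SimpleGraph A} {i : A} {S T : Finset A}
    (h : Prefers G i S T) : ¬ Prefers G i T S := by
  rcases h with h | ⟨h1, h2⟩ <;> rintro (h' | ⟨h1', h2'⟩) <;> omega

lemma clique_card_le_two {G : SimpleGraph A} (hbip : G.Colorable 2) {C : Finset A}
    (hC : ∀ a ∈ C, ∀ b ∈ C, a ≠ b → G.Adj a b) : C.card ≤ 2 := by
  have hcl : G.IsClique (↑C : Set A) := fun a ha b hb hne =>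
    hC a (Finset.mem_coe.1 ha) b (Finset.mem_coe.1 hb) hne
  exact hcl.card_le_of_colorable hbip

end Helpers

/-- If the friendship graph is bipartite, then a strictly core stable
partition exists iff the subgraph induced by the vertices of degree at least one has a
perfect matching (i.e. there is a matching of `G` covering exactly those vertices). -/
theorem stmt_5 [Nonempty A] (G : SimpleGraph A) [DecidableRel G.Adj]
    (hbip : G.Colorable 2) :
    (∃ P : Finpartition (Finset.univ : Finset A), StrictlyCoreStable G P) ↔
      ∃ M : G.Subgraph, M.verts = {v : A | 0 < G.degree v} ∧ M.IsMatching := by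
  constructor
  · rintro ⟨P, hP⟩
    -- Step 1: within one's own part there are no enemies
    have hzero : ∀ C ∈ P.parts, ∀ i ∈ C, enemiesIn G i C = 0 := by
      intro C hC i hiC
      by_contra hne
      have hpos : 0 < enemiesIn G i C := Nat.pos_of_ne_zero hne
      have hsing0 : enemiesIn G i {i} = 0 :=
        enemiesIn_eq_zero_iff.2 (fun j hj hne' => absurd (Finset.mem_singleton.1 hj) hne')
      apply hP {i}
      refine ⟨⟨i, Finset.mem_singleton_self i⟩, ?_, ⟨i, Finset.mem_singleton_self i, ?_⟩⟩
      · intro j hj C' hC' hjC'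
        rw [Finset.mem_singleton] at hj; subst hj
        have hCC' : C' = C := P.eq_of_mem_parts hC' hC hjC' hiC
        subst hCC'
        exact prefers_asymm (Or.inl (by rw [hsing0]; exact hpos))
      · intro C' hC' hiC'
        have hCC' : C' = C := P.eq_of_mem_parts hC' hC hiC' hiC
        subst hCC'
        exact Or.inl (by rw [hsing0]; exact hpos)
    -- Step 2: each part is a clique, hence of size at most 2
    have hclique : ∀ C ∈ P.parts, ∀ a ∈ C, ∀ b ∈ C, a ≠ b → G.Adj a b := by
      intro C hC a ha b hb hab
      exact enemiesIn_eq_zero_iff.1 (hzero C hC a ha) b hb (fun h => hab h.symm)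
    have hcard : ∀ C ∈ P.parts, C.card ≤ 2 := fun C hC => clique_card_le_two hbip (hclique C hC)
    -- Step 3: every non-isolated agent is matched inside her part
    have hmatched : ∀ i : A, 0 < G.degree i → ∃ w, G.Adj i w ∧ w ∈ P.part i := by
      intro i hdeg
      by_contra hno
      push_neg at hno
      obtain ⟨w, hw⟩ := (G.degree_pos_iff_exists_adj i).1 hdeg
      have hiP : i ∈ P.part i := P.mem_part (Finset.mem_univ i)
      have hpmem : P.part i ∈ P.parts := P.part_mem.2 (Finset.mem_univ i)
      have hpart_eq : P.part i = {i} := by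
        apply Finset.eq_singleton_iff_unique_mem.2 ⟨hiP, ?_⟩
        intro x hx
        by_contra hxi
        exact hno x (hclique _ hpmem i hiP x hx (fun h => hxi h.symm)) hx
      set B : Finset A := {i, w} with hB
      have hiw : i ≠ w := G.ne_of_adj hw
      have hiB : i ∈ B := Finset.mem_insert_self i {w}
      have hwB : w ∈ B := Finset.mem_insert_of_mem (Finset.mem_singleton_self w)
      have heB : ∀ j ∈ B, enemiesIn G j B = 0 := by
        intro j hj
        apply enemiesIn_eq_zero_iff.2
        intro k hk hkj
        rw [hB, Finset.mem_insert, Finset.mem_singleton] at hj hk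
        rcases hj with rfl | rfl <;> rcases hk with rfl | rfl
        · exact absurd rfl hkj
        · exact hw
        · exact hw.symm
        · exact absurd rfl hkj
      have hfB : ∀ j ∈ B, friendsIn G j B = 1 := by
        intro j hj
        rw [hB, Finset.mem_insert, Finset.mem_singleton] at hj
        rcases hj with rfl | rfl
        · exact friendsIn_pair hw
        · rw [hB, Finset.pair_comm]; exact friendsIn_pair hw.symm
      apply hP B
      refine ⟨⟨i, hiB⟩, ?_, ⟨i, hiB, ?_⟩⟩
      · intro j hj C hC hjC hpref
        have heC : enemiesIn G j C = 0 := hzero C hC j hjC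
        have heBj : enemiesIn G j B = 0 := heB j hj
        have hfBj : friendsIn G j B = 1 := hfB j hj
        have hfCle : friendsIn G j C ≤ 1 := by
          have h1 := friendsIn_le (G := G) hjC
          have h2 := hcard C hC
          omega
        rcases hpref with h | ⟨h1, h2⟩ <;> omega
      · intro C hC hiC
        have hCeq : C = {i} := by rw [← hpart_eq]; exact (P.part_eq_of_mem hC hiC).symm
        subst hCeq
        refine Or.inr ⟨?_, ?_⟩
        · rw [heB i hiB,
            enemiesIn_eq_zero_iff.2 (fun j hj hne' => absurd (Finset.mem_singleton.1 hj) hne')]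
        · rw [friendsIn_singleton, hfB i hiB]; exact Nat.zero_lt_one
    -- Build the matching
    refine ⟨{ verts := {v | 0 < G.degree v},
              Adj := fun v w => G.Adj v w ∧ v ∈ P.part w ∧ w ∈ P.part v,
              adj_sub := fun h => h.1,
              edge_vert := fun {v w} h => (G.degree_pos_iff_exists_adj v).2 ⟨w, h.1⟩,
              symm := ⟨fun v w h => ⟨h.1.symm, h.2.2, h.2.1⟩⟩ }, rfl, ?_⟩
    intro v hv
    have hdeg : 0 < G.degree v := hv
    obtain ⟨w, hadj, hwp⟩ := hmatched v hdeg
    have hpartw : P.part w = P.part v :=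
      P.part_eq_of_mem (P.part_mem.2 (Finset.mem_univ v)) hwp
    refine ⟨w, ⟨hadj, ?_, hwp⟩, ?_⟩
    · rw [hpartw]; exact P.mem_part (Finset.mem_univ v)
    · rintro w' ⟨hadj', _, hw'2⟩
      by_contra hne
      have hvp : v ∈ P.part v := P.mem_part (Finset.mem_univ v)
      have h3 : ({v, w, w'} : Finset A) ⊆ P.part v := by
        intro x hx
        simp only [Finset.mem_insert, Finset.mem_singleton] at hx
        rcases hx with rfl | rfl | rfl
        exacts [hvp, hwp, hw'2]
      have hc3 : ({v, w, w'} : Finset A).card = 3 :=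
        Finset.card_eq_three.2 ⟨v, w, w', G.ne_of_adj hadj, G.ne_of_adj hadj',
          fun h => hne h.symm, rfl⟩
      have hle := Finset.card_le_card h3
      have h2 := hcard _ (P.part_mem.2 (Finset.mem_univ v))
      omega
  · rintro ⟨M, hMv, hM⟩
    have hsetoid : Equivalence (fun v w : A => v = w ∨ M.Adj v w) := by
      constructor
      · exact fun v => Or.inl rfl
      · rintro v w (rfl | h)
        · exact Or.inl rfl
        · exact Or.inr h.symm
      · rintro v w x (rfl | h) h2
        · exact h2
        · rcases h2 with rfl | h2
          · exact Or.inr h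
          · exact Or.inl ((hM (M.edge_vert h.symm)).unique h.symm h2)
    let s : Setoid A := ⟨_, hsetoid⟩
    let P := Finpartition.ofSetoid s
    have hmem_part : ∀ i j : A, j ∈ P.part i ↔ (i = j ∨ M.Adj i j) := fun i j =>
      Finpartition.mem_part_ofSetoid_iff_rel
    have hpart : ∀ i : A, (¬ 0 < G.degree i ∧ P.part i = {i}) ∨
        (∃ w, G.Adj i w ∧ P.part i = {i, w} ∧ w ≠ i) := by
      intro i
      by_cases hv : i ∈ M.verts
      · right
        obtain ⟨w, hw, huniq⟩ := hM hv
        refine ⟨w, M.adj_sub hw, ?_, fun h => G.irrefl (h ▸ M.adj_sub hw)⟩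
        ext j
        rw [hmem_part]
        simp only [Finset.mem_insert, Finset.mem_singleton]
        constructor
        · rintro (rfl | h)
          · exact Or.inl rfl
          · exact Or.inr (huniq j h)
        · rintro (rfl | rfl)
          · exact Or.inl rfl
          · exact Or.inr hw
      · left
        constructor
        · rw [hMv] at hv; exact hv
        · ext j
          rw [hmem_part, Finset.mem_singleton]
          constructor
          · rintro (rfl | h)
            · rfl
            · exact absurd (M.edge_vert h) hv
          · rintro rfl; exact Or.inl rfl
    have heC : ∀ i : A, enemiesIn G i (P.part i) = 0 := by
      intro i
      rcases hpart i with ⟨_, hp⟩ | ⟨w, hadj, hp, _⟩ <;> rw [hp] <;>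
        apply enemiesIn_eq_zero_iff.2
      · intro j hj hne
        exact absurd (Finset.mem_singleton.1 hj) hne
      · intro j hj hne
        rcases Finset.mem_insert.1 hj with rfl | hj'
        · exact absurd rfl hne
        · rw [Finset.mem_singleton] at hj'; subst hj'; exact hadj
    refine ⟨P, ?_⟩
    rintro B ⟨hBne, hweak, i, hiB, hstrict⟩
    have heB : ∀ j ∈ B, enemiesIn G j B = 0 := by
      intro j hj
      have h := hweak j hj (P.part j) (P.part_mem.2 (Finset.mem_univ j))
        (P.mem_part (Finset.mem_univ j))
      by_contra hne
      exact h (Or.inl (by rw [heC j]; exact Nat.pos_of_ne_zero hne))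
    have hBclique : ∀ a ∈ B, ∀ b ∈ B, a ≠ b → G.Adj a b := fun a ha b hb hab =>
      enemiesIn_eq_zero_iff.1 (heB a ha) b hb (fun h => hab h.symm)
    have hBcard := clique_card_le_two hbip hBclique
    have hs := hstrict (P.part i) (P.part_mem.2 (Finset.mem_univ i))
      (P.mem_part (Finset.mem_univ i))
    rcases hs with h | ⟨h1, h2⟩
    · rw [heB i hiB, heC i] at h
      exact absurd h (lt_irrefl 0)
    · have hfB_le : friendsIn G i B ≤ 1 := by
        have := friendsIn_le (G := G) hiB
        omega
      rcases hpart i with ⟨hdeg, hp⟩ | ⟨w, hadj, hp, hwi⟩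
      · have h0 : friendsIn G i B = 0 := by
          simp only [friendsIn, Finset.card_eq_zero, Finset.filter_eq_empty_iff]
          intro j hj hadj
          exact hdeg ((G.degree_pos_iff_exists_adj i).2 ⟨j, hadj⟩)
        rw [hp, friendsIn_singleton, h0] at h2
        exact absurd h2 (lt_irrefl 0)
      · rw [hp, friendsIn_pair hadj] at h2
        omega
end

section
/- Every core stable partition of an enemy-oriented hedonic game without neutrals contains a coalition whose members form a clique of maximum size of the friendship graph G^f. -/
open scoped Classical

variable {A : Type*}

variable [Fintype A] [DecidableEq A]

set_option linter.unusedSectionVars false in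
lemma enemiesIn_eq_zero_of_clique (G : SimpleGraph A) {C : Finset A}
    (hC : G.IsClique (C : Set A)) {i : A} (hi : i ∈ C) : enemiesIn G i C = 0 := by
  unfold enemiesIn
  simp only [Finset.card_eq_zero, Finset.filter_eq_empty_iff]
  intro j hj
  rintro ⟨hne, hnadj⟩
  exact hnadj (hC (by exact_mod_cast hi) (by exact_mod_cast hj) hne.symm)

set_option linter.unusedSectionVars false in
lemma clique_of_enemiesIn_eq_zero (G : SimpleGraph A) {C : Finset A}
    (hz : ∀ i ∈ C, enemiesIn G i C = 0) : G.IsClique (C : Set A) := by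
  intro i hi j hj hij
  have hi' : i ∈ C := by exact_mod_cast hi
  have hj' : j ∈ C := by exact_mod_cast hj
  have := hz i hi'
  unfold enemiesIn at this
  simp only [Finset.card_eq_zero, Finset.filter_eq_empty_iff] at this
  have h2 := this hj'
  push_neg at h2
  exact h2 hij.symm

set_option linter.unusedSectionVars false in
lemma friendsIn_of_clique (G : SimpleGraph A) {C : Finset A}
    (hC : G.IsClique (C : Set A)) {i : A} (hi : i ∈ C) :
    friendsIn G i C = C.card - 1 := by
  have : C.filter (fun j => G.Adj i j) = C.erase i := by
    ext j
    simp only [Finset.mem_filter, Finset.mem_erase]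
    constructor
    · rintro ⟨hj, hadj⟩
      exact ⟨fun e => G.irrefl (e ▸ hadj), hj⟩
    · rintro ⟨hne, hj⟩
      exact ⟨hj, hC (by exact_mod_cast hi) (by exact_mod_cast hj) (Ne.symm hne)⟩
  rw [friendsIn, this, Finset.card_erase_of_mem hi]

set_option linter.unusedSectionVars false in
lemma enemiesIn_singleton' (G : SimpleGraph A) (i : A) : enemiesIn G i {i} = 0 := by
  simp [enemiesIn, Finset.filter_singleton]

/-- Every core stable partition contains a coalition whose members form a
maximum-size clique of the friendship graph. -/
theorem stmt_7 [Nonempty A] (G : SimpleGraph A)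
    (P : Finpartition (Finset.univ : Finset A)) (h : CoreStable G P) :
    ∃ C ∈ P.parts, G.IsClique (C : Set A) ∧
      ∀ D : Finset A, G.IsClique (D : Set A) → D.card ≤ C.card := by
  have hpartclique : ∀ C ∈ P.parts, G.IsClique (C : Set A) := by
    intro C hC
    apply clique_of_enemiesIn_eq_zero
    intro i hi
    by_contra hne
    apply h {i}
    refine ⟨⟨i, Finset.mem_singleton_self i⟩, ?_⟩
    intro j hj C' hC' hjC'
    rw [Finset.mem_singleton] at hj
    subst hj
    have hCC : C' = C := P.eq_of_mem_parts hC' hC hjC' hi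
    subst hCC
    left
    rw [enemiesIn_singleton']
    exact Nat.pos_of_ne_zero hne
  obtain ⟨a⟩ := ‹Nonempty A›
  have hsing : G.IsClique (({a} : Finset A) : Set A) := by
    rw [Finset.coe_singleton]
    exact G.isClique_singleton a
  have hsne : (Finset.univ.filter (fun D : Finset A => G.IsClique (D : Set A))).Nonempty :=
    ⟨{a}, by simp [hsing]⟩
  obtain ⟨K, hKs, hKmax⟩ := Finset.exists_max_image _ Finset.card hsne
  have hKclique : G.IsClique (K : Set A) := (Finset.mem_filter.mp hKs).2
  have hKmax' : ∀ D : Finset A, G.IsClique (D : Set A) → D.card ≤ K.card := by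
    intro D hD
    exact hKmax D (by simp [hD])
  have hKne : K.Nonempty := by
    rw [← Finset.card_pos]
    have h1 := hKmax' {a} hsing
    simp only [Finset.card_singleton] at h1
    omega
  have hnb := h K
  rw [Blocks] at hnb
  push_neg at hnb
  obtain ⟨i, hiK, C, hCparts, hiC, hnp⟩ := hnb hKne
  refine ⟨C, hCparts, hpartclique C hCparts, ?_⟩
  intro D hD
  have hCclique := hpartclique C hCparts
  have e1 := enemiesIn_eq_zero_of_clique G hKclique hiK
  have e2 := enemiesIn_eq_zero_of_clique G hCclique hiC
  have f1 := friendsIn_of_clique G hKclique hiK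
  have f2 := friendsIn_of_clique G hCclique hiC
  rw [Prefers] at hnp
  push_neg at hnp
  have hf := hnp.2 (by rw [e1, e2])
  rw [f1, f2] at hf
  have hCpos : 1 ≤ C.card := Finset.card_pos.mpr ⟨i, hiC⟩
  have hKpos : 1 ≤ K.card := Finset.card_pos.mpr hKne
  have hKC : K.card ≤ C.card := by omega
  exact le_trans (hKmax' D hD) hKC
end
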